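/- The Hausdorff dimension of C_{s,𝒟} equals liminf_n (−n ln N)/ln(s_n). -/

import Mathlib

/-!
The `N ^ n` images of the cylinders of length `n` cover the set and, since the digits differ by
at most `κ`, have diameter at most `κ R_n ≤ 2 κ s_n`; this gives the upper bound.
For the lower bound, push the uniform product measure on digit sequences forward. By the
separation condition, sequences first differing at index `k` are mapped at least
`(1 - M) τ s_k` apart, so a set of diameter below that meets a single cylinder of length `k + 1`
and has mass at most `N ^ -(k + 1)`; the mass distribution principle concludes.
-/

open MeasureTheory Filter Set Topology Metric
open scoped ENNReal NNReal

noncomputable section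

/-- `log (number of cylinders of length n) / log (1 / s n)`. -/
def cylinderExponent (N : ℕ) (s : ℕ → ℝ) (n : ℕ) : ℝ≥0∞ :=
  ENNReal.ofReal (-(n * Real.log N) / Real.log (s n))

lemma log_natCast_pow_mul_rpow {N : ℕ} (hN : 0 < N) (n : ℕ) {x : ℝ} (hx : 0 < x) (b : ℝ) :
    Real.log ((N : ℝ) ^ n * x ^ b) = n * Real.log N + b * Real.log x := by
  rw [Real.log_mul (by positivity) (by positivity), Real.log_pow, Real.log_rpow hx]

lemma neg_mul_log_div_log_lt_iff {N : ℕ} (hN : 0 < N) (n : ℕ) {x : ℝ} (hx0 : 0 < x)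
    (hx1 : x < 1) (b : ℝ) :
    -(n * Real.log N) / Real.log x < b ↔ (N : ℝ) ^ n * x ^ b < 1 := by
  rw [div_lt_iff_of_neg (Real.log_neg hx0 hx1), ← Real.log_neg_iff (by positivity),
    log_natCast_pow_mul_rpow hN n hx0]
  constructor <;> intro h <;> linarith

lemma lt_neg_mul_log_div_log_iff {N : ℕ} (hN : 0 < N) (n : ℕ) {x : ℝ} (hx0 : 0 < x)
    (hx1 : x < 1) (b : ℝ) :
    b < -(n * Real.log N) / Real.log x ↔ 1 < (N : ℝ) ^ n * x ^ b := by
  rw [lt_div_iff_of_neg (Real.log_neg hx0 hx1), ← Real.log_pos_iff (by positivity),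
    log_natCast_pow_mul_rpow hN n hx0]
  constructor <;> intro h <;> linarith

lemma exists_le_lt_of_antitone {s : ℕ → ℝ} (hanti : Antitone s) (hs0 : Tendsto s atTop (𝓝 0))
    {δ : ℝ} (hδ : 0 < δ) {n₀ : ℕ} (hn₀ : δ < s n₀) :
    ∃ k, n₀ ≤ k ∧ s (k + 1) ≤ δ ∧ δ < s k := by
  classical
  have hex : ∃ m, s m ≤ δ := (hs0.eventually_le_const hδ).exists
  have hlt : n₀ < Nat.find hex := by
    by_contra! h
    exact (hanti h).trans (Nat.find_spec hex) |>.not_gt hn₀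
  obtain ⟨k, hk⟩ : ∃ k, Nat.find hex = k + 1 := ⟨Nat.find hex - 1, by omega⟩
  exact ⟨k, by omega, hk ▸ Nat.find_spec hex, not_le.1 (Nat.find_min hex (by omega))⟩

section HausdorffDimension

variable {X : Type*} [EMetricSpace X] [MeasurableSpace X] [BorelSpace X]

theorem dimH_le_liminf_cylinderExponent {N : ℕ} (hN : 0 < N) {s : ℕ → ℝ} (hs : ∀ n, 0 < s n)
    (hs0 : Tendsto s atTop (𝓝 0)) {C : ℝ} (hC : 0 ≤ C) {S : Set X} {ι : ℕ → Type*}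
    [∀ n, Fintype (ι n)] (hcard : ∀ n, Fintype.card (ι n) ≤ N ^ n) (t : ∀ n, ι n → Set X)
    (hcover : ∀ n, S ⊆ ⋃ w, t n w) (hdiam : ∀ n w, ediam (t n w) ≤ ENNReal.ofReal (C * s n)) :
    dimH S ≤ liminf (cylinderExponent N s) atTop := by
  refine le_of_forall_gt fun e he => ?_
  obtain ⟨b, hLb, hbe⟩ := ENNReal.lt_iff_exists_nnreal_btwn.1 he
  obtain ⟨d, hbd, hde⟩ := ENNReal.lt_iff_exists_nnreal_btwn.1 hbe
  have hbd' : (b : ℝ) < d := by exact_mod_cast hbd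
  have hdecay : Tendsto (fun n => C ^ (d : ℝ) * s n ^ ((d : ℝ) - b)) atTop (𝓝 0) := by
    simpa [Real.zero_rpow (sub_pos.2 hbd').ne'] using
      (hs0.rpow_const (Or.inr (sub_pos.2 hbd').le)).const_mul (C ^ (d : ℝ))
  have hsmall : ∃ᶠ n in atTop, ∑ w, ediam (t n w) ^ (d : ℝ) ≤ 1 := by
    refine ((frequently_lt_of_liminf_lt (by isBoundedDefault) hLb).and_eventually
      ((hs0.eventually_lt_const one_pos).and (hdecay.eventually_le_const one_pos))).mono ?_
    rintro n ⟨hbn, hn1, hdn⟩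
    rw [cylinderExponent, ← ENNReal.ofReal_coe_nnreal, ENNReal.ofReal_lt_ofReal_iff'] at hbn
    have hNb := (neg_mul_log_div_log_lt_iff hN n (hs n) hn1 b).1 hbn.1
    have hreal : (N : ℝ) ^ n * (C * s n) ^ (d : ℝ) ≤ 1 := by
      have hsplit :
          (C * s n) ^ (d : ℝ) = s n ^ (b : ℝ) * (C ^ (d : ℝ) * s n ^ ((d : ℝ) - b)) := by
        rw [Real.mul_rpow hC (hs n).le, mul_left_comm, ← Real.rpow_add (hs n), add_sub_cancel]
      rw [hsplit, ← mul_assoc]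
      exact mul_le_one₀ hNb.le
        (mul_nonneg (Real.rpow_nonneg hC _) (Real.rpow_nonneg (hs n).le _)) hdn
    calc ∑ w, ediam (t n w) ^ (d : ℝ)
        ≤ ∑ _w : ι n, ENNReal.ofReal ((C * s n) ^ (d : ℝ)) := by
          gcongr with w
          rw [← ENNReal.ofReal_rpow_of_nonneg (mul_nonneg hC (hs n).le) d.coe_nonneg]
          exact ENNReal.rpow_le_rpow (hdiam n w) d.coe_nonneg
      _ ≤ ENNReal.ofReal ((N : ℝ) ^ n * (C * s n) ^ (d : ℝ)) := by
          rw [Finset.sum_const, Finset.card_univ, nsmul_eq_mul,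
            ENNReal.ofReal_mul (by positivity), ENNReal.ofReal_pow (by positivity),
            ENNReal.ofReal_natCast]
          gcongr
          exact_mod_cast hcard n
      _ ≤ 1 := ENNReal.ofReal_le_one.2 hreal
  have hr : Tendsto (fun n => ENNReal.ofReal (C * s n)) atTop (𝓝 0) := by
    simpa using ENNReal.tendsto_ofReal (hs0.const_mul C)
  have hμH : μH[d] S ≤ 1 :=
    (Measure.hausdorffMeasure_le_liminf_sum d S _ hr t (.of_forall hdiam)
      (.of_forall hcover)).trans (liminf_le_of_frequently_le' hsmall)
  exact (dimH_le_of_hausdorffMeasure_ne_top (ne_top_of_le_ne_top ENNReal.one_ne_top hμH)).trans_lt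
    hde

theorem le_dimH_of_forall_measure_le (ν : Measure X) {S : Set X} (hS : ν S ≠ 0) {d : ℝ≥0}
    {C ε : ℝ≥0∞} (hC : C ≠ 0) (hε : 0 < ε)
    (h : ∀ B, ediam B ≤ ε → C * ν B ≤ ediam B ^ (d : ℝ)) : (d : ℝ≥0∞) ≤ dimH S := by
  have hle : C • ν ≤ μH[d] := Measure.le_hausdorffMeasure d (C • ν) ε hε h
  exact le_dimH_of_hausdorffMeasure_ne_zero
    (pos_iff_ne_zero.1 ((pos_iff_ne_zero.2 (mul_ne_zero hC hS)).trans_le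
      (Measure.le_iff'.1 hle S)))

theorem liminf_cylinderExponent_le_dimH {N : ℕ} (hN : 1 < N) {s : ℕ → ℝ} (hs : ∀ n, 0 < s n)
    (hs0 : Tendsto s atTop (𝓝 0)) (hanti : Antitone s) {c : ℝ} (hc : 0 < c) (ν : Measure X)
    {S : Set X} (hS : ν S ≠ 0)
    (hν : ∀ n B, ediam B < ENNReal.ofReal (c * s n) → ν B ≤ ((N : ℝ≥0∞) ^ (n + 1))⁻¹) :
    liminf (cylinderExponent N s) atTop ≤ dimH S := by
  refine ENNReal.le_of_forall_nnreal_lt fun d hd => ?_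
  obtain ⟨b, hdb, hbL⟩ := ENNReal.lt_iff_exists_nnreal_btwn.1 hd
  have hev : ∀ᶠ n in atTop, ((N : ℝ≥0∞) ^ n)⁻¹ ≤ ENNReal.ofReal (s n ^ (d : ℝ)) := by
    filter_upwards [eventually_lt_of_lt_liminf hbL, hs0.eventually_lt_const one_pos] with n hbn hn1
    rw [cylinderExponent, ← ENNReal.ofReal_coe_nnreal] at hbn
    have hNb := (lt_neg_mul_log_div_log_iff (by omega) n (hs n) hn1 b).1
      ((ENNReal.ofReal_lt_ofReal_iff_of_nonneg b.coe_nonneg).1 hbn)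
    have hreal : ((N : ℝ) ^ n)⁻¹ ≤ s n ^ (d : ℝ) :=
      calc ((N : ℝ) ^ n)⁻¹ ≤ s n ^ (b : ℝ) := by
            rw [inv_le_iff_one_le_mul₀ (by positivity), mul_comm]
            exact hNb.le
        _ ≤ s n ^ (d : ℝ) :=
            Real.rpow_le_rpow_of_exponent_ge (hs n) hn1.le (by exact_mod_cast hdb.le)
    rw [← ENNReal.ofReal_natCast, ← ENNReal.ofReal_pow (Nat.cast_nonneg N),
      ← ENNReal.ofReal_inv_of_pos (by positivity)]
    exact ENNReal.ofReal_le_ofReal hreal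
  obtain ⟨n₀, hn₀⟩ := eventually_atTop.1 hev
  have hcs : ∀ n, 0 < c * s n := fun n => mul_pos hc (hs n)
  refine le_dimH_of_forall_measure_le ν hS (C := ENNReal.ofReal (c ^ (d : ℝ)))
    (ε := ENNReal.ofReal (c * s n₀ / 2)) (by simp [Real.rpow_pos_of_pos hc])
    (by simpa using hcs n₀) fun B hB => ?_
  rcases eq_or_ne (ediam B) 0 with h0 | h0
  · -- a set of diameter zero lies in arbitrarily deep cylinders
    have hνB : ν B = 0 := by
      have hN' : (N : ℝ≥0∞)⁻¹ < 1 := ENNReal.inv_lt_one.2 (by exact_mod_cast hN)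
      refine le_antisymm (ge_of_tendsto' ((ENNReal.tendsto_pow_atTop_nhds_zero_of_lt_one
        hN').comp (tendsto_add_atTop_nat 1)) fun m => ?_) bot_le
      simpa [ENNReal.inv_pow] using hν m B (h0 ▸ ENNReal.ofReal_pos.2 (hcs m))
    simp [hνB]
  set δ := (ediam B).toReal
  have hδB : ediam B = ENNReal.ofReal δ :=
    (ENNReal.ofReal_toReal (ne_top_of_le_ne_top ENNReal.ofReal_ne_top hB)).symm
  have hδ : 0 < δ := ENNReal.toReal_pos h0 (ne_top_of_le_ne_top ENNReal.ofReal_ne_top hB)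
  have hδn₀ : δ < c * s n₀ := by
    have := (ENNReal.ofReal_le_ofReal_iff (by linarith [hcs n₀])).1 (hδB ▸ hB)
    linarith [hcs n₀]
  obtain ⟨k, hk, hk1, hk2⟩ := exists_le_lt_of_antitone (hanti.const_mul hc.le)
    (by simpa using hs0.const_mul c) hδ hδn₀
  calc ENNReal.ofReal (c ^ (d : ℝ)) * ν B
      ≤ ENNReal.ofReal (c ^ (d : ℝ)) * ENNReal.ofReal (s (k + 1) ^ (d : ℝ)) := by
        gcongr
        exact (hν k B (hδB ▸ (ENNReal.ofReal_lt_ofReal_iff (hcs k)).2 hk2)).trans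
          (hn₀ (k + 1) (by omega))
    _ = ENNReal.ofReal ((c * s (k + 1)) ^ (d : ℝ)) := by
        rw [← ENNReal.ofReal_mul (by positivity), Real.mul_rpow hc.le (hs _).le]
    _ ≤ ediam B ^ (d : ℝ) := by
        rw [hδB, ENNReal.ofReal_rpow_of_nonneg hδ.le d.coe_nonneg]
        exact ENNReal.ofReal_le_ofReal (Real.rpow_le_rpow (hcs _).le hk1 d.coe_nonneg)

end HausdorffDimension

section SymbolicSpace

variable {α X : Type*} [MetricSpace X] {s : ℕ → ℝ} {F : (ℕ → α) → X}

lemma infinitePi_uniformOfFintype_cylinder [Fintype α] [Nonempty α] [MeasurableSpace α]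
    [MeasurableSingletonClass α] (x : ℕ → α) (n : ℕ) :
    Measure.infinitePi (fun _ : ℕ => (PMF.uniformOfFintype α).toMeasure) (PiNat.cylinder x n)
      = ((Fintype.card α : ℝ≥0∞) ^ n)⁻¹ := by
  rw [PiNat.cylinder_eq_pi, Measure.infinitePi_pi _ fun i _ => measurableSet_singleton (x i)]
  simp_rw [PMF.toMeasure_apply_singleton _ _ (measurableSet_singleton _),
    PMF.uniformOfFintype_apply, Finset.prod_const, Finset.card_range, ENNReal.inv_pow]

lemma exists_preimage_subset_cylinder [Nonempty α] {r : ℕ → ℝ} (hr : Antitone r)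
    (hF : ∀ x y, x ≠ y → r (PiNat.firstDiff x y) ≤ dist (F x) (F y)) {B : Set X} {n : ℕ}
    (hB : ediam B < ENNReal.ofReal (r n)) : ∃ x, F ⁻¹' B ⊆ PiNat.cylinder x (n + 1) := by
  rcases (F ⁻¹' B).eq_empty_or_nonempty with h | ⟨x, hx⟩
  · exact ⟨Classical.arbitrary _, h ▸ empty_subset _⟩
  refine ⟨x, fun y hy => ?_⟩
  rcases eq_or_ne y x with rfl | hne
  · exact PiNat.self_mem_cylinder _ _
  rw [PiNat.mem_cylinder_iff_le_firstDiff hne]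
  by_contra! hlt
  have hrn : r n ≤ dist (F y) (F x) := (hr (Nat.lt_succ_iff.1 hlt)).trans (hF y x hne)
  have hdiam : edist (F y) (F x) ≤ ediam B := edist_le_ediam_of_mem hy hx
  rw [edist_dist] at hdiam
  exact ((ENNReal.ofReal_le_ofReal hrn).trans hdiam).not_gt hB

theorem dimH_range_le_liminf_cylinderExponent [Fintype α] [Nonempty α] [MeasurableSpace X]
    [BorelSpace X] (hs : ∀ n, 0 < s n)
    (hs0 : Tendsto s atTop (𝓝 0)) {C : ℝ} (hC : 0 ≤ C)
    (hF : ∀ x y n, y ∈ PiNat.cylinder x n → dist (F x) (F y) ≤ C * s n) :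
    dimH (range F) ≤ liminf (cylinderExponent (Fintype.card α) s) atTop := by
  refine dimH_le_liminf_cylinderExponent Fintype.card_pos hs hs0 hC
    (fun n => by simp) (fun n (w : Fin n → α) => F '' {x | ∀ i : Fin n, x i = w i})
    (fun n => ?_) fun n w => ediam_image_le_iff.2 fun x hx y hy => ?_
  · rintro _ ⟨x, rfl⟩
    exact mem_iUnion.2 ⟨fun i => x i, x, fun i => rfl, rfl⟩
  · rw [edist_dist]
    exact ENNReal.ofReal_le_ofReal
      (hF x y n fun i hi => (hy ⟨i, hi⟩).trans (hx ⟨i, hi⟩).symm)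

theorem liminf_cylinderExponent_le_dimH_range [Fintype α] [MeasurableSpace α]
    [MeasurableSingletonClass α] [MeasurableSpace X] [BorelSpace X]
    (hα : 1 < Fintype.card α) (hs : ∀ n, 0 < s n) (hs0 : Tendsto s atTop (𝓝 0))
    (hanti : Antitone s) {c : ℝ} (hc : 0 < c) (hFm : Measurable F)
    (hF : ∀ x y, x ≠ y → c * s (PiNat.firstDiff x y) ≤ dist (F x) (F y)) :
    liminf (cylinderExponent (Fintype.card α) s) atTop ≤ dimH (range F) := by
  have : Nonempty α := Fintype.card_pos_iff.1 (by omega)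
  set μ := Measure.infinitePi fun _ : ℕ => (PMF.uniformOfFintype α).toMeasure
  refine liminf_cylinderExponent_le_dimH hα hs hs0 hanti hc (μ.map F) ?_ fun n B hB => ?_
  · have h := Measure.le_map_apply (μ := μ) hFm.aemeasurable (range F)
    rw [preimage_range, measure_univ] at h
    exact (zero_lt_one.trans_le h).ne'
  obtain ⟨x, hx⟩ := exists_preimage_subset_cylinder (hanti.const_mul hc.le) hF
    (B := closure B) (by rwa [ediam_closure])
  calc μ.map F B ≤ μ.map F (closure B) := measure_mono subset_closure
    _ = μ (F ⁻¹' closure B) := Measure.map_apply hFm isClosed_closure.measurableSet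
    _ ≤ μ (PiNat.cylinder x (n + 1)) := measure_mono hx
    _ = _ := infinitePi_uniformOfFintype_cylinder x (n + 1)

end SymbolicSpace

lemma tsum_tail_le_of_separation {s : ℕ → ℝ} (hs : ∀ n, 0 ≤ s n) {κ τ M : ℝ} (hτ : 0 < τ)
    (hτκ : τ ≤ κ) (hM : M < 1) (hsep : ∀ n, κ * ∑' i, s (n + 1 + i) ≤ M * (τ * s n)) (n : ℕ) :
    ∑' i, s (n + 1 + i) ≤ s n := by
  have hMτ : M * (τ * s n) ≤ κ * s n := by
    nlinarith [mul_nonneg (mul_nonneg (sub_nonneg.2 hM.le) hτ.le) (hs n),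
      mul_le_mul_of_nonneg_right hτκ (hs n)]
  exact le_of_mul_le_mul_left ((hsep n).trans hMτ) (hτ.trans_le hτκ)

lemma antitone_of_tsum_tail_le {s : ℕ → ℝ} (hs : ∀ n, 0 ≤ s n) (hsum : Summable s)
    (h : ∀ n, ∑' i, s (n + 1 + i) ≤ s n) : Antitone s :=
  antitone_nat_of_succ_le fun n =>
    ((hsum.comp_injective (add_right_injective (n + 1))).le_tsum 0 fun _ _ => hs _).trans (h n)

lemma tsum_tail_le_two_mul {s : ℕ → ℝ} (hsum : Summable s) (h : ∀ n, ∑' i, s (n + 1 + i) ≤ s n)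
    (n : ℕ) : ∑' i, s (n + i) ≤ 2 * s n := by
  have htail : Summable fun i => s (n + i) := hsum.comp_injective (add_right_injective n)
  rw [htail.tsum_eq_zero_add]
  simp only [add_zero, ← add_assoc, add_right_comm n _ 1]
  linarith [h n]

section DigitExpansion

variable {E α : Type*} [NormedAddCommGroup E] [NormedSpace ℝ E]
  {s : ℕ → ℝ} {d : ℕ → α → E} {K κ : ℝ}

def digitExpansion (s : ℕ → ℝ) (d : ℕ → α → E) (x : ℕ → α) : E :=
  ∑' i, s i • d i (x i)

lemma norm_smul_digit_le (hd : ∀ n a, ‖d n a‖ ≤ K) (n : ℕ) (a : α) :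
    ‖s n • d n a‖ ≤ K * |s n| := by
  rw [norm_smul, Real.norm_eq_abs, mul_comm]
  exact mul_le_mul_of_nonneg_right (hd n a) (abs_nonneg _)

lemma summable_digitExpansion [CompleteSpace E] (hsum : Summable s) (hd : ∀ n a, ‖d n a‖ ≤ K)
    (x : ℕ → α) :
    Summable fun i => s i • d i (x i) :=
  Summable.of_norm_bounded (hsum.abs.mul_left K) fun i => norm_smul_digit_le hd i (x i)

lemma continuous_digitExpansion [CompleteSpace E] [TopologicalSpace α] [DiscreteTopology α]
    (hsum : Summable s) (hd : ∀ n a, ‖d n a‖ ≤ K) : Continuous (digitExpansion s d) :=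
  continuous_tsum (fun i => (continuous_of_discreteTopology (f := fun a => s i • d i a)).comp
    (continuous_apply i))
    (hsum.abs.mul_left K) fun i x => norm_smul_digit_le hd i (x i)

lemma digitExpansion_sub_eq_tsum [CompleteSpace E] (hsum : Summable s) (hd : ∀ n a, ‖d n a‖ ≤ K)
    {x y : ℕ → α} {n : ℕ} (hy : y ∈ PiNat.cylinder x n) :
    digitExpansion s d x - digitExpansion s d y
      = ∑' i, s (n + i) • (d (n + i) (x (n + i)) - d (n + i) (y (n + i))) := by
  have hsub := (summable_digitExpansion hsum hd x).sub (summable_digitExpansion hsum hd y)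
  rw [digitExpansion, digitExpansion, ← (summable_digitExpansion hsum hd x).tsum_sub
    (summable_digitExpansion hsum hd y), ← hsub.sum_add_tsum_nat_add n,
    Finset.sum_eq_zero fun i hi => by rw [hy i (Finset.mem_range.1 hi), sub_self], zero_add]
  simp only [add_comm _ n, smul_sub]

lemma norm_tsum_tail_le (hs : ∀ n, 0 ≤ s n) (hsum : Summable s)
    (hκ : ∀ n a b, ‖d n a - d n b‖ ≤ κ) (x y : ℕ → α) (n : ℕ) :
    ‖∑' i, s (n + i) • (d (n + i) (x (n + i)) - d (n + i) (y (n + i)))‖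
      ≤ κ * ∑' i, s (n + i) := by
  refine tsum_of_norm_bounded
    ((hsum.comp_injective (add_right_injective n)).hasSum.mul_left κ) fun i => ?_
  rw [norm_smul, Real.norm_of_nonneg (hs _), mul_comm]
  exact mul_le_mul_of_nonneg_right (hκ _ _ _) (hs _)

lemma dist_digitExpansion_le [CompleteSpace E] (hs : ∀ n, 0 ≤ s n) (hsum : Summable s)
    (hd : ∀ n a, ‖d n a‖ ≤ K) (hκ : ∀ n a b, ‖d n a - d n b‖ ≤ κ) {x y : ℕ → α} {n : ℕ}
    (hy : y ∈ PiNat.cylinder x n) :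
    dist (digitExpansion s d x) (digitExpansion s d y) ≤ κ * ∑' i, s (n + i) := by
  rw [dist_eq_norm, digitExpansion_sub_eq_tsum hsum hd hy]
  exact norm_tsum_tail_le hs hsum hκ x y n

lemma le_dist_digitExpansion [CompleteSpace E] (hs : ∀ n, 0 ≤ s n) (hsum : Summable s)
    (hd : ∀ n a, ‖d n a‖ ≤ K) (hκ : ∀ n a b, ‖d n a - d n b‖ ≤ κ) {τ : ℝ}
    (hτ : ∀ n a b, a ≠ b → τ ≤ ‖d n a - d n b‖) {x y : ℕ → α} (hxy : x ≠ y) :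
    τ * s (PiNat.firstDiff x y) - κ * ∑' i, s (PiNat.firstDiff x y + 1 + i)
      ≤ dist (digitExpansion s d x) (digitExpansion s d y) := by
  set k := PiNat.firstDiff x y
  have hy : y ∈ PiNat.cylinder x k := by
    simpa only [PiNat.firstDiff_comm] using PiNat.mem_cylinder_firstDiff y x
  have hsummand : Summable fun i =>
      s (k + i) • (d (k + i) (x (k + i)) - d (k + i) (y (k + i))) := by
    have := (summable_digitExpansion hsum hd x).sub (summable_digitExpansion hsum hd y)
    simpa [smul_sub, Function.comp_def] using this.comp_injective (add_right_injective k)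
  have hhead : τ * s k ≤ ‖s k • (d k (x k) - d k (y k))‖ := by
    rw [norm_smul, Real.norm_of_nonneg (hs k), mul_comm]
    exact mul_le_mul_of_nonneg_left (hτ k _ _ (PiNat.apply_firstDiff_ne hxy)) (hs k)
  have htail := norm_tsum_tail_le hs hsum hκ x y (k + 1)
  rw [dist_eq_norm, digitExpansion_sub_eq_tsum hsum hd hy, hsummand.tsum_eq_zero_add]
  simp only [add_zero, ← add_assoc, add_right_comm k _ 1] at htail ⊢
  linarith [norm_sub_le_norm_add (s k • (d k (x k) - d k (y k)))
    (∑' i, s (k + 1 + i) • (d (k + 1 + i) (x (k + 1 + i)) - d (k + 1 + i) (y (k + 1 + i))))]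

end DigitExpansion

end

/-- The Hausdorff dimension of `C_{s,𝒟}` equals
`liminf_n (−n ln N)/ln(sₙ)`.  Here `Rₙ = ∑_{i ≥ n} sᵢ` is the tail of the series after
the first `n` terms and the separation condition `κRₙ₊₁ ≤ M τ sₙ`, `M < 1`, holds. -/
theorem stmt_14 (p N : ℕ) (hN : 2 ≤ N)
    (s : ℕ → ℝ) (hs : ∀ n, 0 < s n) (hsum : Summable s)
    (d : ℕ → Fin N → EuclideanSpace ℝ (Fin p))
    (hzero : ∀ n, d n ⟨0, by omega⟩ = 0)
    (κ τ : ℝ) (hτ : 0 < τ)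
    (hκ : ∀ (n : ℕ) (i j : Fin N), i ≠ j → ‖d n i - d n j‖ ≤ κ)
    (hτd : ∀ (n : ℕ) (i j : Fin N), i ≠ j → τ ≤ ‖d n i - d n j‖)
    (R : ℕ → ℝ) (hR : ∀ n, R n = ∑' i, s (n + i))
    (M : ℝ) (hM : M < 1) (hsep : ∀ n, κ * R (n + 1) ≤ M * (τ * s n)) :
    dimH (Set.range fun σ : ℕ → Fin N => ∑' i, s i • d i (σ i))
      = Filter.atTop.liminf
          (fun n : ℕ => ENNReal.ofReal (-((n : ℝ) * Real.log N) / Real.log (s n))) := by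
  have h01 : (⟨0, by omega⟩ : Fin N) ≠ ⟨1, by omega⟩ := by simp
  have hτκ : τ ≤ κ := (hτd 0 _ _ h01).trans (hκ 0 _ _ h01)
  have hdκ : ∀ n a b, ‖d n a - d n b‖ ≤ κ := fun n a b => by
    rcases eq_or_ne a b with rfl | hab
    · simpa using hτ.le.trans hτκ
    · exact hκ n a b hab
  have hd : ∀ n a, ‖d n a‖ ≤ κ := fun n a => by simpa [hzero] using hdκ n a ⟨0, by omega⟩
  have : NeZero N := ⟨by omega⟩
  have hs' : ∀ n, 0 ≤ s n := fun n => (hs n).le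
  have hsepR : ∀ n, κ * ∑' i, s (n + 1 + i) ≤ M * (τ * s n) := fun n => by
    simpa [hR] using hsep n
  have htail := tsum_tail_le_of_separation hs' hτ hτκ hM hsepR
  have hs0 := hsum.tendsto_atTop_zero
  apply le_antisymm
  · have := dimH_range_le_liminf_cylinderExponent (F := digitExpansion s d) hs hs0
      (C := 2 * κ) (by linarith) fun x y n hy =>
        (dist_digitExpansion_le hs' hsum hd hdκ hy).trans
          (by nlinarith [tsum_tail_le_two_mul hsum htail n])
    rwa [Fintype.card_fin] at this
  · have := liminf_cylinderExponent_le_dimH_range (by rw [Fintype.card_fin]; omega)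
      hs hs0 (antitone_of_tsum_tail_le hs' hsum htail) (c := (1 - M) * τ) (by nlinarith)
      (continuous_digitExpansion hsum hd).measurable fun x y hxy =>
        (le_dist_digitExpansion hs' hsum hd hdκ hτd hxy).trans'
          (by nlinarith [hsepR (PiNat.firstDiff x y)])
    rwa [Fintype.card_fin] at this
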